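/- Let (K, L, c) be a weakly infeasible problem, where K ⊆ ℝ^n is an extended second order cone with exactly m Lorentz-cone blocks, L ⊆ ℝ^n a linear subspace, and c ∈ ℝ^n. Then there exist a linear subspace L' ⊆ L and a point c' ∈ L + c such that (K, L', c') is weakly infeasible and the dimension of the affine set L' + c' (i.e., dim L') is at most m. -/

import Mathlib

open scoped RealInnerProductSpace Pointwise
open Classical

noncomputable section

/-- The Lorentz (second order) cone `SOC^{k+1} = {x = (x₀, x̄) : ‖x̄‖ ≤ x₀} ⊆ ℝ^{k+1}`. -/
def SOC (k : ℕ) : Set (EuclideanSpace ℝ (Fin (k + 1))) :=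
  {x | Real.sqrt (∑ j : Fin k, x j.succ ^ 2) ≤ x 0}

/-- The reflection `x' = (x₀, -x̄)` of `x` with respect to the Lorentz cone. -/
def reflect {k : ℕ} (x : EuclideanSpace ℝ (Fin (k + 1))) : EuclideanSpace ℝ (Fin (k + 1)) :=
  WithLp.toLp 2 (fun j => if j = 0 then x 0 else - x j)

/-- The closed half-space `H_d = {x : dᵀx ≥ 0}`. -/
def halfSpace {k : ℕ} (d : EuclideanSpace ℝ (Fin (k + 1))) :
    Set (EuclideanSpace ℝ (Fin (k + 1))) :=
  {x | 0 ≤ ⟪d, x⟫}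

/-- The ray `ray_d = {α • d : α ≥ 0}`. -/
def ray {k : ℕ} (d : EuclideanSpace ℝ (Fin (k + 1))) :
    Set (EuclideanSpace ℝ (Fin (k + 1))) :=
  {x | ∃ α : ℝ, 0 ≤ α ∧ x = α • d}

/-- A block of an extended second order cone: the trivial cone `{0}`, the whole space,
the Lorentz cone, a closed half-space `H_d` with `d ∈ SOC \ {0}`, or a ray `ray_d` with
`d ∈ SOC`. -/
def IsESOCBlock {k : ℕ} (B : Set (EuclideanSpace ℝ (Fin (k + 1)))) : Prop :=
  B = {0} ∨ B = Set.univ ∨ B = SOC k ∨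
    (∃ d ∈ SOC k, d ≠ 0 ∧ B = halfSpace d) ∨ ∃ d ∈ SOC k, B = ray d

/-- The total space `ℝ^n = ℝ^{n_1} × ⋯ × ℝ^{n_m}` with the Euclidean (ℓ²) structure. -/
abbrev TS {m : ℕ} (k : Fin m → ℕ) := PiLp 2 fun i => EuclideanSpace ℝ (Fin (k i + 1))

/-- The product cone `K = K^{n_1} × ⋯ × K^{n_m}` determined by the blocks `B i`. -/
def prodSet {m : ℕ} (k : Fin m → ℕ) (B : ∀ i, Set (EuclideanSpace ℝ (Fin (k i + 1)))) :
    Set (TS k) :=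
  {x | ∀ i, x i ∈ B i}

/-- `B` describes an extended second order cone (blockwise). -/
def IsESOC {m : ℕ} (k : Fin m → ℕ) (B : ∀ i, Set (EuclideanSpace ℝ (Fin (k i + 1)))) : Prop :=
  ∀ i, IsESOCBlock (B i)

/-- `H₁(a, K) = {i : K^{n_i} = SOC^{n_i}, a_{n_i} ∈ ri SOC^{n_i}}`. -/
def H1 {m : ℕ} (k : Fin m → ℕ) (B : ∀ i, Set (EuclideanSpace ℝ (Fin (k i + 1))))
    (a : TS k) : Set (Fin m) :=
  {i | B i = SOC (k i) ∧ a i ∈ intrinsicInterior ℝ (SOC (k i))}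

/-- `H₂(a, K) = {i : K^{n_i} = SOC^{n_i}, a_{n_i} ∈ (rel bd SOC^{n_i}) \ {0}}`. -/
def H2 {m : ℕ} (k : Fin m → ℕ) (B : ∀ i, Set (EuclideanSpace ℝ (Fin (k i + 1))))
    (a : TS k) : Set (Fin m) :=
  {i | B i = SOC (k i) ∧ a i ∈ intrinsicFrontier ℝ (SOC (k i)) ∧ a i ≠ 0}

/-- The relaxed cone `K̃` obtained from `K` and `a` (blockwise): block `i` becomes the whole
space if `i ∈ H₁(a, K)`, the half-space `H_{(a_{n_i})'}` if `i ∈ H₂(a, K)`, and is unchanged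
otherwise. -/
def relaxedBlocks {m : ℕ} (k : Fin m → ℕ) (B : ∀ i, Set (EuclideanSpace ℝ (Fin (k i + 1))))
    (a : TS k) : ∀ i, Set (EuclideanSpace ℝ (Fin (k i + 1))) :=
  fun i =>
    if i ∈ H1 k B a then Set.univ
    else if i ∈ H2 k B a then halfSpace (reflect (a i))
    else B i

/-- The affine set `L + c`. -/
def affineSet {V : Type*} [AddCommGroup V] [Module ℝ V] (L : Submodule ℝ V) (c : V) :
    Set V :=
  {x | x - c ∈ L}

/-- The distance between two sets. -/
def setDist {V : Type*} [NormedAddCommGroup V] (A B : Set V) : ℝ :=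
  sInf (Set.image2 dist A B)

/-- `(K, L, c)` is strongly feasible: `(L + c) ∩ ri K ≠ ∅`. -/
def StronglyFeasible {V : Type*} [NormedAddCommGroup V] [Module ℝ V]
    (K : Set V) (L : Submodule ℝ V) (c : V) : Prop :=
  (affineSet L c ∩ intrinsicInterior ℝ K).Nonempty

/-- `(K, L, c)` is weakly feasible: `K ∩ (L + c) ≠ ∅` but `(L + c) ∩ ri K = ∅`. -/
def WeaklyFeasible {V : Type*} [NormedAddCommGroup V] [Module ℝ V]
    (K : Set V) (L : Submodule ℝ V) (c : V) : Prop :=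
  (K ∩ affineSet L c).Nonempty ∧ affineSet L c ∩ intrinsicInterior ℝ K = ∅

/-- `(K, L, c)` is weakly infeasible: `K ∩ (L + c) = ∅` but `dist(K, L + c) = 0`. -/
def WeaklyInfeasible {V : Type*} [NormedAddCommGroup V] [Module ℝ V]
    (K : Set V) (L : Submodule ℝ V) (c : V) : Prop :=
  K ∩ affineSet L c = ∅ ∧ setDist K (affineSet L c) = 0

/-- `(K, L, c)` is strongly infeasible: `K ∩ (L + c) = ∅` and `dist(K, L + c) > 0`. -/
def StronglyInfeasible {V : Type*} [NormedAddCommGroup V] [Module ℝ V]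
    (K : Set V) (L : Submodule ℝ V) (c : V) : Prop :=
  K ∩ affineSet L c = ∅ ∧ 0 < setDist K (affineSet L c)

/-- `(K, L, c)` is in weak status: weakly feasible or weakly infeasible. -/
def WeakStatus {V : Type*} [NormedAddCommGroup V] [Module ℝ V]
    (K : Set V) (L : Submodule ℝ V) (c : V) : Prop :=
  WeaklyFeasible K L c ∨ WeaklyInfeasible K L c

/-!
A weakly infeasible problem `(K, L, c)` has a direction `a ∈ K ∩ L` that is nonzero on some Lorentz
block: otherwise all directions of `K ∩ L` live in the polyhedral blocks, and a compactness
argument, splitting them off one at a time, makes the problem feasible. Relaxing every Lorentz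
block on which `a` is nonzero, to the whole space if `a` is interior and to the half-space
`H_{a'}` if `a` is on the boundary, gives an extended second order cone `K̃ ⊇ K` with fewer Lorentz
blocks, and every point of `K̃` is carried arbitrarily close to `K` by moving far along `a`.
Recursing on `K̃` until it meets `L + c` collects at most one direction per Lorentz block.
-/

open Filter Topology

lemma intrinsicInterior_eq_interior {V : Type*} [NormedAddCommGroup V] [NormedSpace ℝ V]
    {s : Set V} (hs : (interior s).Nonempty) : intrinsicInterior ℝ s = interior s := by
  refine subset_antisymm ?_ interior_subset_intrinsicInterior
  have hspan : affineSpan ℝ s = ⊤ :=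
    affineSpan_eq_top_of_nonempty_interior (hs.mono (interior_mono (subset_convexHull ℝ s)))
  have hopen : IsOpen (affineSpan ℝ s : Set V) := by
    rw [hspan, AffineSubspace.top_coe]; exact isOpen_univ
  exact (hopen.isOpenEmbedding_subtypeVal.isOpenMap.image_interior_subset _).trans
    (interior_mono (Set.image_preimage_subset _ _))

section SecondOrderCone

variable {n : ℕ}

/-- The part `x̄` of `x = (x₀, x̄)`. -/
def tailVec : EuclideanSpace ℝ (Fin (n + 1)) →ₗ[ℝ] EuclideanSpace ℝ (Fin n) where
  toFun x := WithLp.toLp 2 fun j => x j.succ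
  map_add' _ _ := rfl
  map_smul' _ _ := rfl

@[simp]
lemma tailVec_apply (x : EuclideanSpace ℝ (Fin (n + 1))) (j : Fin n) : tailVec x j = x j.succ :=
  rfl

lemma mem_SOC_iff {x : EuclideanSpace ℝ (Fin (n + 1))} : x ∈ SOC n ↔ ‖tailVec x‖ ≤ x 0 := by
  simp [SOC, EuclideanSpace.norm_eq, Real.norm_eq_abs, sq_abs]

lemma inner_eq_head_mul_add_inner_tailVec (x y : EuclideanSpace ℝ (Fin (n + 1))) :
    ⟪x, y⟫ = x 0 * y 0 + ⟪tailVec x, tailVec y⟫ := by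
  simp [PiLp.inner_apply, Fin.sum_univ_succ, mul_comm]

@[simp]
lemma reflect_apply_zero (x : EuclideanSpace ℝ (Fin (n + 1))) : reflect x 0 = x 0 := by
  simp [reflect]

@[simp]
lemma tailVec_reflect (x : EuclideanSpace ℝ (Fin (n + 1))) : tailVec (reflect x) = -tailVec x := by
  ext j
  simp [reflect, Fin.succ_ne_zero]

lemma continuous_tailVec : Continuous (tailVec : EuclideanSpace ℝ (Fin (n + 1)) → _) :=
  LinearMap.continuous_of_finiteDimensional _

lemma isClosed_SOC : IsClosed (SOC n) := by
  have : SOC n = {x | ‖tailVec x‖ ≤ x 0} := Set.ext fun _ => mem_SOC_iff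
  rw [this]
  exact isClosed_le (continuous_tailVec.norm) (PiLp.continuous_apply 2 _ 0)

lemma add_mem_SOC {x y : EuclideanSpace ℝ (Fin (n + 1))} (hx : x ∈ SOC n) (hy : y ∈ SOC n) :
    x + y ∈ SOC n := by
  rw [mem_SOC_iff] at *
  calc ‖tailVec (x + y)‖ ≤ ‖tailVec x‖ + ‖tailVec y‖ := by
        rw [map_add]; exact norm_add_le _ _
    _ ≤ (x + y) 0 := by simpa using add_le_add hx hy

lemma smul_mem_SOC {x : EuclideanSpace ℝ (Fin (n + 1))} (hx : x ∈ SOC n) {t : ℝ} (ht : 0 ≤ t) :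
    t • x ∈ SOC n := by
  rw [mem_SOC_iff] at *
  simpa [norm_smul, abs_of_nonneg ht] using mul_le_mul_of_nonneg_left hx ht

lemma zero_mem_SOC : (0 : EuclideanSpace ℝ (Fin (n + 1))) ∈ SOC n := by
  simp [mem_SOC_iff]

lemma head_pos_of_mem_SOC {x : EuclideanSpace ℝ (Fin (n + 1))} (hx : x ∈ SOC n) (hx0 : x ≠ 0) :
    0 < x 0 := by
  rw [mem_SOC_iff] at hx
  refine (norm_nonneg _).trans hx |>.lt_of_ne fun h => hx0 ?_
  have htail : tailVec x = 0 := norm_eq_zero.1 (le_antisymm (h ▸ hx) (norm_nonneg _))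
  ext j
  refine Fin.cases h.symm (fun j => ?_) j
  simpa using congrArg (· j) htail

lemma reflect_mem_SOC {x : EuclideanSpace ℝ (Fin (n + 1))} (hx : x ∈ SOC n) :
    reflect x ∈ SOC n := by
  simpa [mem_SOC_iff] using hx

lemma reflect_ne_zero {x : EuclideanSpace ℝ (Fin (n + 1))} (hx : x ≠ 0) : reflect x ≠ 0 := by
  contrapose! hx
  ext j
  refine Fin.cases ?_ (fun j => ?_) j
  · simpa using congrArg (· 0) hx
  · simpa using congrArg (· j) (congrArg tailVec hx)

lemma inner_reflect_nonneg {x y : EuclideanSpace ℝ (Fin (n + 1))} (hx : x ∈ SOC n)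
    (hy : y ∈ SOC n) : 0 ≤ ⟪reflect x, y⟫ := by
  rw [mem_SOC_iff] at hx hy
  rw [inner_eq_head_mul_add_inner_tailVec, reflect_apply_zero, tailVec_reflect, inner_neg_left]
  nlinarith [real_inner_le_norm (tailVec x) (tailVec y), norm_nonneg (tailVec x),
    norm_nonneg (tailVec y)]

@[simp]
lemma tailVec_single_zero (a : ℝ) : tailVec (EuclideanSpace.single (0 : Fin (n + 1)) a) = 0 := by
  ext j; simp [Fin.succ_ne_zero]

lemma interior_SOC : interior (SOC n) = {x | ‖tailVec x‖ < x 0} := by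
  refine subset_antisymm (fun x hx => ?_)
    (interior_maximal (fun x hx => mem_SOC_iff.2 hx.le)
      (isOpen_lt continuous_tailVec.norm (PiLp.continuous_apply 2 _ 0)))
  obtain ⟨ε, hε, hball⟩ := Metric.mem_nhds_iff.1 (mem_interior_iff_mem_nhds.1 hx)
  have hmem : x - EuclideanSpace.single 0 (ε / 2) ∈ SOC n := hball (by simp [abs_of_pos hε, hε])
  rw [mem_SOC_iff, map_sub, tailVec_single_zero, sub_zero] at hmem
  exact hmem.trans_lt (by simp [hε])

lemma intrinsicInterior_SOC : intrinsicInterior ℝ (SOC n) = {x | ‖tailVec x‖ < x 0} := by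
  rw [intrinsicInterior_eq_interior, interior_SOC]
  exact ⟨EuclideanSpace.single 0 1, by simp [interior_SOC]⟩

lemma intrinsicFrontier_SOC : intrinsicFrontier ℝ (SOC n) = {x | ‖tailVec x‖ = x 0} := by
  rw [← closure_sdiff_intrinsicInterior, isClosed_SOC.closure_eq, intrinsicInterior_SOC]
  ext x
  simp only [Set.mem_sdiff, Set.mem_ofPred_eq, mem_SOC_iff, not_lt]
  exact ⟨fun h => le_antisymm h.1 h.2, fun h => ⟨h.le, h.ge⟩⟩

lemma eventually_add_smul_mem_SOC {a : EuclideanSpace ℝ (Fin (n + 1))}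
    (ha : ‖tailVec a‖ < a 0) (x : EuclideanSpace ℝ (Fin (n + 1))) :
    ∀ᶠ t : ℝ in atTop, x + t • a ∈ SOC n := by
  filter_upwards [eventually_ge_atTop 0,
    eventually_ge_atTop ((‖tailVec x‖ - x 0) / (a 0 - ‖tailVec a‖))] with t ht0 ht
  rw [div_le_iff₀ (sub_pos.2 ha)] at ht
  rw [mem_SOC_iff, map_add, map_smul]
  calc ‖tailVec x + t • tailVec a‖ ≤ ‖tailVec x‖ + t * ‖tailVec a‖ := by
        simpa [norm_smul, abs_of_nonneg ht0] using norm_add_le (tailVec x) (t • tailVec a)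
    _ ≤ (x + t • a) 0 := by simp only [PiLp.add_apply, PiLp.smul_apply, smul_eq_mul]; nlinarith

/-- At a boundary direction `a` the ray `x + t • a` need not enter `SOC` for any `t`, but when
`x` lies in the half-space `H_{a'}` a fixed shift of the head by `δ` suffices for all large `t`:
the terms quadratic in `t` cancel because `‖ā‖ = a₀`. -/
lemma eventually_add_smul_add_single_mem_SOC {a x : EuclideanSpace ℝ (Fin (n + 1))}
    (ha : ‖tailVec a‖ = a 0) (ha0 : 0 < a 0) (hx : 0 ≤ ⟪reflect a, x⟫) {δ : ℝ} (hδ : 0 < δ) :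
    ∀ᶠ t : ℝ in atTop, x + t • a + EuclideanSpace.single 0 δ ∈ SOC n := by
  rw [inner_eq_head_mul_add_inner_tailVec, reflect_apply_zero, tailVec_reflect,
    inner_neg_left, real_inner_comm] at hx
  filter_upwards [eventually_ge_atTop 0, eventually_ge_atTop (‖tailVec x‖ ^ 2 / (2 * δ * a 0)),
    eventually_ge_atTop (-x 0 / a 0)] with t ht0 ht1 ht2
  rw [div_le_iff₀ (by positivity)] at ht1
  rw [div_le_iff₀ ha0] at ht2
  have hhead : (x + t • a + EuclideanSpace.single (0 : Fin (n + 1)) δ) 0 = x 0 + t * a 0 + δ := by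
    simp
  have hnorm : ‖tailVec x + t • tailVec a‖ ^ 2
      = ‖tailVec x‖ ^ 2 + 2 * t * ⟪tailVec x, tailVec a⟫ + t ^ 2 * ‖tailVec a‖ ^ 2 := by
    rw [norm_add_sq_real, inner_smul_right, norm_smul, Real.norm_eq_abs, mul_pow, sq_abs]
    ring
  rw [mem_SOC_iff, hhead, map_add, tailVec_single_zero, add_zero, map_add, map_smul,
    ← pow_le_pow_iff_left₀ (norm_nonneg _) (by nlinarith) two_ne_zero, hnorm, ha]
  nlinarith [mul_nonneg ht0 hx, sq_nonneg (x 0 + δ)]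

end SecondOrderCone

lemma ray_eq_span_inter_halfSpace {n : ℕ} (d : EuclideanSpace ℝ (Fin (n + 1))) :
    ray d = (Submodule.span ℝ {d} : Set _) ∩ halfSpace d := by
  ext v
  simp only [ray, halfSpace, Set.mem_inter_iff, SetLike.mem_coe, Submodule.mem_span_singleton,
    Set.mem_ofPred_eq]
  constructor
  · rintro ⟨α, hα, rfl⟩
    rw [inner_smul_right, real_inner_self_eq_norm_sq]
    exact ⟨⟨α, rfl⟩, by positivity⟩
  · rintro ⟨⟨α, rfl⟩, hα⟩
    rcases eq_or_ne d 0 with rfl | hd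
    · exact ⟨0, le_rfl, by simp⟩
    rw [inner_smul_right, real_inner_self_eq_norm_sq] at hα
    exact ⟨α, nonneg_of_mul_nonneg_left hα (by positivity), rfl⟩

namespace IsESOCBlock

variable {n : ℕ} {K : Set (EuclideanSpace ℝ (Fin (n + 1)))}

lemma zero_mem (h : IsESOCBlock K) : 0 ∈ K := by
  rcases h with rfl | rfl | rfl | ⟨d, -, -, rfl⟩ | ⟨d, -, rfl⟩
  · rfl
  · trivial
  · exact zero_mem_SOC
  · simp [halfSpace]
  · exact ⟨0, le_rfl, by simp⟩

lemma add_smul_mem (h : IsESOCBlock K) {x a : EuclideanSpace ℝ (Fin (n + 1))} (hx : x ∈ K)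
    (ha : a ∈ K) {t : ℝ} (ht : 0 ≤ t) : x + t • a ∈ K := by
  rcases h with rfl | rfl | rfl | ⟨d, -, -, rfl⟩ | ⟨d, -, rfl⟩
  · simp_all
  · trivial
  · exact add_mem_SOC hx (smul_mem_SOC ha ht)
  · simp only [halfSpace, Set.mem_ofPred_eq, inner_add_right, inner_smul_right] at *
    positivity
  · obtain ⟨α, hα, rfl⟩ := hx
    obtain ⟨β, hβ, rfl⟩ := ha
    exact ⟨α + t * β, by positivity, by rw [smul_smul, ← add_smul]⟩

lemma exists_eq_inter_halfSpace (h : IsESOCBlock K) (hK : K ≠ SOC n) :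
    ∃ (U : Submodule ℝ (EuclideanSpace ℝ (Fin (n + 1)))) (r : EuclideanSpace ℝ (Fin (n + 1))),
      K = (U : Set _) ∩ halfSpace r := by
  rcases h with rfl | rfl | rfl | ⟨d, -, -, rfl⟩ | ⟨d, -, rfl⟩
  · exact ⟨⊥, 0, by ext; simp [halfSpace]⟩
  · exact ⟨⊤, 0, by ext; simp [halfSpace]⟩
  · exact absurd rfl hK
  · exact ⟨⊤, d, by simp⟩
  · exact ⟨_, d, ray_eq_span_inter_halfSpace d⟩

end IsESOCBlock

section Approach

variable {V : Type*}

lemma mem_affineSet_self [AddCommGroup V] [Module ℝ V] (L : Submodule ℝ V) (c : V) :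
    c ∈ affineSet L c := by
  simp [affineSet]

lemma affineSet_subset_affineSet [AddCommGroup V] [Module ℝ V] {L' L : Submodule ℝ V}
    {c' c : V} (hL : L' ≤ L) (hc' : c' ∈ affineSet L c) : affineSet L' c' ⊆ affineSet L c :=
  fun x hx => by simpa [affineSet] using L.add_mem (hL hx) hc'

lemma isClosed_affineSet [NormedAddCommGroup V] [NormedSpace ℝ V] [FiniteDimensional ℝ V]
    (L : Submodule ℝ V) (c : V) : IsClosed (affineSet L c) :=
  L.closed_of_finiteDimensional.preimage (continuous_sub_right c)

variable [NormedAddCommGroup V]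

def Approaches (K S : Set V) : Prop :=
  ∀ ε > 0, ∃ x ∈ K, ∃ y ∈ S, dist x y < ε

lemma Approaches.mono_left {K K' S : Set V} (h : Approaches K S) (hK : K ⊆ K') :
    Approaches K' S := fun ε hε =>
  let ⟨x, hx, y, hy, hxy⟩ := h ε hε
  ⟨x, hK hx, y, hy, hxy⟩

lemma setDist_eq_zero_iff {K S : Set V} (hK : K.Nonempty) (hS : S.Nonempty) :
    setDist K S = 0 ↔ Approaches K S := by
  have hbdd : BddBelow (Set.image2 dist K S) := ⟨0, by rintro _ ⟨x, -, y, -, rfl⟩; positivity⟩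
  have hnonneg : 0 ≤ setDist K S := Real.sInf_nonneg (by rintro _ ⟨x, -, y, -, rfl⟩; positivity)
  constructor
  · intro h ε hε
    obtain ⟨_, ⟨x, hx, y, hy, rfl⟩, hlt⟩ :=
      exists_lt_of_csInf_lt (hK.image2 hS) (h.trans_lt hε : setDist K S < ε)
    exact ⟨x, hx, y, hy, hlt⟩
  · refine fun h => le_antisymm (le_of_forall_pos_lt_add fun ε hε => ?_) hnonneg
    obtain ⟨x, hx, y, hy, hlt⟩ := h ε hε
    exact (csInf_le hbdd ⟨x, hx, y, hy, rfl⟩).trans_lt (by simpa using hlt)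

/-- If the points `x n ∈ C` approaching `L + c` stay bounded, a limit point lies in both sets;
otherwise a limit of `x n / ‖x n‖` is a direction of both `C` and `L`. -/
lemma inter_nonempty_or_exists_ne_zero_of_approaches [NormedSpace ℝ V] [FiniteDimensional ℝ V]
    {C : Set V} (hC : IsClosed C) (hcone : ∀ x ∈ C, ∀ t : ℝ, 0 ≤ t → t • x ∈ C)
    {L : Submodule ℝ V} {c : V} (h : Approaches C (affineSet L c)) :
    (C ∩ affineSet L c).Nonempty ∨ ∃ d ∈ C, d ∈ L ∧ d ≠ 0 := by
  choose x hx y hy hxy using fun n : ℕ => h (1 / (n + 1)) Nat.one_div_pos_of_nat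
  have hxy0 : Tendsto (fun n => x n - y n) atTop (𝓝 0) :=
    squeeze_zero_norm (fun n => (dist_eq_norm (x n) (y n) ▸ hxy n).le)
      tendsto_one_div_add_atTop_nhds_zero_nat
  by_cases hbdd : ∃ R, ∃ᶠ n in atTop, ‖x n‖ ≤ R
  · left
    obtain ⟨R, hR⟩ := hbdd
    obtain ⟨φ, hφ, hφR⟩ := extraction_of_frequently_atTop hR
    obtain ⟨p, -, ψ, hψ, hp⟩ := (isCompact_closedBall (0 : V) R).tendsto_subseq
      (fun n => mem_closedBall_zero_iff.2 (hφR n))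
    have hyp : Tendsto (fun n => y (φ (ψ n))) atTop (𝓝 p) := by
      simpa using hp.sub (hxy0.comp (hφ.comp hψ).tendsto_atTop)
    exact ⟨p, hC.mem_of_tendsto hp (.of_forall fun n => hx _),
      (isClosed_affineSet L c).mem_of_tendsto hyp (.of_forall fun n => hy _)⟩
  · right
    push Not at hbdd
    have hnorm : Tendsto (fun n => ‖x n‖) atTop atTop :=
      tendsto_atTop.2 fun R => (hbdd R).mono fun n hn => hn.le
    set u := fun n => ‖x n‖⁻¹ • x n
    have hu : ∀ n, u n ∈ Metric.closedBall 0 1 := fun n =>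
      mem_closedBall_zero_iff.2 (by rw [norm_smul, norm_inv, norm_norm]; exact inv_mul_le_one)
    obtain ⟨d, -, ψ, hψ, hd⟩ := (isCompact_closedBall (0 : V) 1).tendsto_subseq hu
    have hnormψ := hnorm.comp hψ.tendsto_atTop
    have hinv : Tendsto (fun n => ‖x (ψ n)‖⁻¹) atTop (𝓝 0) :=
      tendsto_inv_atTop_zero.comp hnormψ
    refine ⟨d, hC.mem_of_tendsto hd (.of_forall fun n => hcone _ (hx _) _ (by positivity)), ?_, ?_⟩
    · have hv : Tendsto (fun n => ‖x (ψ n)‖⁻¹ • (y (ψ n) - c)) atTop (𝓝 d) := by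
        have := (hd.sub ((hinv.smul (hxy0.comp hψ.tendsto_atTop)))).sub (hinv.smul_const c)
        simp only [zero_smul, sub_zero] at this
        refine this.congr fun n => ?_
        simp [u, smul_sub]
      exact L.closed_of_finiteDimensional.mem_of_tendsto hv
        (.of_forall fun n => L.smul_mem _ (hy _))
    · have hone : ∀ᶠ n in atTop, ‖u (ψ n)‖ = 1 :=
        (hnormψ.eventually_gt_atTop 0).mono fun n hn => norm_smul_inv_norm (norm_pos_iff.1 hn)
      rw [← norm_ne_zero_iff,
        tendsto_nhds_unique hd.norm (tendsto_const_nhds.congr' (hone.mono fun n hn => hn.symm))]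
      exact one_ne_zero

end Approach

lemma Submodule.exists_finrank_lt_forall_sub_smul_mem {V : Type*} [NormedAddCommGroup V]
    [InnerProductSpace ℝ V] [FiniteDimensional ℝ V] {L : Submodule ℝ V} {d : V} (hdL : d ∈ L)
    (hd : d ≠ 0) :
    ∃ L₁ ≤ L, Module.finrank ℝ L₁ < Module.finrank ℝ L ∧ ∀ y ∈ L, ∃ s : ℝ, y - s • d ∈ L₁ := by
  have hdd : ⟪d, d⟫ ≠ 0 := inner_self_ne_zero.2 hd
  refine ⟨L ⊓ (ℝ ∙ d)ᗮ, inf_le_left, Submodule.finrank_lt_finrank_of_lt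
    (inf_le_left.lt_of_ne fun h => hdd ?_), fun y hy => ⟨⟪d, y⟫ / ⟪d, d⟫, ?_⟩⟩
  · have : d ∈ L ⊓ (ℝ ∙ d)ᗮ := by rw [h]; exact hdL
    exact Submodule.mem_orthogonal_singleton_iff_inner_right.1 this.2
  · refine ⟨L.sub_mem hy (L.smul_mem _ hdL),
      Submodule.mem_orthogonal_singleton_iff_inner_right.2 ?_⟩
    rw [inner_sub_right, inner_smul_right, div_mul_cancel₀ _ hdd, sub_self]

section EventuallyNear

variable {V : Type*} [NormedAddCommGroup V] [NormedSpace ℝ V]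

def EventuallyNearAlong (K : Set V) (a x : V) : Prop :=
  ∀ δ > 0, ∃ w, ‖w‖ < δ ∧ ∀ᶠ t : ℝ in atTop, x + t • a + w ∈ K

lemma approaches_affineSet_sup_span {K K' : Set V} {a : V}
    (hK' : ∀ x ∈ K', EventuallyNearAlong K a x) {L : Submodule ℝ V} {c : V}
    (h : Approaches K' (affineSet L c)) : Approaches K (affineSet (L ⊔ ℝ ∙ a) c) := by
  intro ε hε
  obtain ⟨x, hx, y, hy, hxy⟩ := h (ε / 2) (half_pos hε)
  obtain ⟨w, hw, hev⟩ := hK' x hx (ε / 2) (half_pos hε)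
  obtain ⟨t, ht⟩ := hev.exists
  refine ⟨_, ht, y + t • a, ?_, ?_⟩
  · have : y + t • a - c = (y - c) + t • a := by abel
    simpa [affineSet, this] using
      Submodule.add_mem_sup hy (Submodule.smul_mem _ t (Submodule.mem_span_singleton_self a))
  · calc dist (x + t • a + w) (y + t • a) = ‖(x - y) + w‖ := by
          rw [dist_eq_norm]; congr 1; abel
      _ ≤ dist x y + ‖w‖ := by rw [dist_eq_norm]; exact norm_add_le _ _
      _ < ε := by linarith

end EventuallyNear

section Product

variable {m : ℕ} {k : Fin m → ℕ}

lemma isClosed_prodSet {B : ∀ i, Set (EuclideanSpace ℝ (Fin (k i + 1)))}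
    (hB : ∀ i, IsClosed (B i)) : IsClosed (prodSet k B) := by
  have : prodSet k B = ⋂ i, (fun x : TS k => x i) ⁻¹' B i := by ext; simp [prodSet]
  rw [this]
  exact isClosed_iInter fun i => (hB i).preimage (PiLp.continuous_apply 2 _ i)

lemma EventuallyNearAlong.prodSet {B : ∀ i, Set (EuclideanSpace ℝ (Fin (k i + 1)))} {a x : TS k}
    (h : ∀ i, EventuallyNearAlong (B i) (a i) (x i)) : EventuallyNearAlong (prodSet k B) a x := by
  intro δ hδ
  obtain ⟨η, hη, hcont⟩ := Metric.uniformContinuous_iff.1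
    (PiLp.uniformContinuous_toLp 2 fun i => EuclideanSpace ℝ (Fin (k i + 1))) δ hδ
  choose w hw hev using fun i => h i η hη
  refine ⟨WithLp.toLp 2 w, ?_, ?_⟩
  · simpa using hcont ((dist_pi_lt_iff hη).2 fun i => by simpa using hw i) (b := 0)
  · filter_upwards [eventually_all.2 hev] with t ht i
    simpa using ht i

end Product

section MixedCone

variable {m : ℕ} {k : Fin m → ℕ}

/-- Every extended second order cone has this form, and unlike those the class is stable under
dropping half-space constraints. -/
def mixedCone (soc : Fin m → Prop) (U : ∀ i, Submodule ℝ (EuclideanSpace ℝ (Fin (k i + 1))))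
    (r : ∀ i, EuclideanSpace ℝ (Fin (k i + 1))) : Set (TS k) :=
  prodSet k fun i => if soc i then SOC (k i) else (U i : Set _) ∩ halfSpace (r i)

/-- `H_0` is the whole space, so replacing `r i` by `0` drops the constraint of block `i`. -/
def dropConstraints (r : ∀ i, EuclideanSpace ℝ (Fin (k i + 1))) (d : TS k) :
    ∀ i, EuclideanSpace ℝ (Fin (k i + 1)) :=
  fun i => if ⟪r i, d i⟫ = 0 then r i else 0

variable {soc : Fin m → Prop} {U : ∀ i, Submodule ℝ (EuclideanSpace ℝ (Fin (k i + 1)))}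
  {r : ∀ i, EuclideanSpace ℝ (Fin (k i + 1))}

lemma mem_mixedCone {x : TS k} :
    x ∈ mixedCone soc U r ↔
      ∀ i, (soc i → x i ∈ SOC (k i)) ∧ (¬ soc i → x i ∈ U i ∧ 0 ≤ ⟪r i, x i⟫) := by
  refine forall_congr' fun i => ?_
  by_cases hi : soc i <;> simp [hi, halfSpace]

lemma isClosed_mixedCone : IsClosed (mixedCone soc U r) := by
  refine isClosed_prodSet fun i => ?_
  split_ifs
  · exact isClosed_SOC
  · exact (U i).closed_of_finiteDimensional.inter
      (isClosed_le continuous_const (continuous_const.inner continuous_id))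

lemma smul_mem_mixedCone {x : TS k} (hx : x ∈ mixedCone soc U r) {t : ℝ} (ht : 0 ≤ t) :
    t • x ∈ mixedCone soc U r := by
  rw [mem_mixedCone] at hx ⊢
  refine fun i => ⟨fun hi => smul_mem_SOC ((hx i).1 hi) ht, fun hi => ?_⟩
  obtain ⟨hU, hr⟩ := (hx i).2 hi
  simpa [inner_smul_right] using ⟨(U i).smul_mem t hU, mul_nonneg ht hr⟩

lemma sub_smul_mem_mixedCone_dropConstraints {d x : TS k} (hd : d ∈ mixedCone soc U r)
    (hd0 : ∀ i, soc i → d i = 0) (hx : x ∈ mixedCone soc U r) (t : ℝ) :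
    x - t • d ∈ mixedCone soc U (dropConstraints r d) := by
  rw [mem_mixedCone] at hx hd ⊢
  refine fun i => ⟨fun hi => by simpa [hd0 i hi] using (hx i).1 hi, fun hi => ?_⟩
  obtain ⟨hxU, hxr⟩ := (hx i).2 hi
  refine ⟨(U i).sub_mem hxU ((U i).smul_mem t ((hd i).2 hi).1), ?_⟩
  by_cases hrd : ⟪r i, d i⟫ = 0 <;>
    simp [dropConstraints, hrd, inner_sub_right, inner_smul_right, hxr]

lemma eventually_add_smul_mem_mixedCone {d a : TS k} (hd : d ∈ mixedCone soc U r)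
    (hd0 : ∀ i, soc i → d i = 0) (ha : a ∈ mixedCone soc U (dropConstraints r d)) :
    ∀ᶠ t : ℝ in atTop, a + t • d ∈ mixedCone soc U r := by
  rw [mem_mixedCone] at ha hd
  simp_rw [mem_mixedCone]
  refine eventually_all.2 fun i => ?_
  by_cases hi : soc i
  · exact .of_forall fun t => by simpa [hi, hd0 i hi] using (ha i).1 hi
  obtain ⟨haU, har⟩ := (ha i).2 hi
  obtain ⟨hdU, hdr⟩ := (hd i).2 hi
  have hU : ∀ t : ℝ, a i + t • d i ∈ U i := fun t => (U i).add_mem haU ((U i).smul_mem t hdU)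
  rcases hdr.eq_or_lt with hrd | hrd
  · refine .of_forall fun t => ?_
    simpa [hi, hU, inner_add_right, inner_smul_right, ← hrd, dropConstraints] using har
  · filter_upwards [eventually_ge_atTop (-⟪r i, a i⟫ / ⟪r i, d i⟫)] with t ht
    rw [div_le_iff₀ hrd] at ht
    simp only [hi, not_false_eq_true, forall_const, IsEmpty.forall_iff, true_and,
      PiLp.add_apply, PiLp.smul_apply, hU, inner_add_right, inner_smul_right]
    linarith

/-- Induction on `dim L`. A direction `d` from `inter_nonempty_or_exists_ne_zero_of_approaches`
vanishes on the Lorentz blocks; dropping the constraints that `d` is not orthogonal to, one may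
project along `d` onto a hyperplane of `L`, and moving far along `d` restores the constraints. -/
theorem mixedCone_inter_affineSet_nonempty (L : Submodule ℝ (TS k)) (c : TS k)
    (hdir : ∀ a ∈ mixedCone soc U r, a ∈ L → ∀ i, soc i → a i = 0)
    (happ : Approaches (mixedCone soc U r) (affineSet L c)) :
    (mixedCone soc U r ∩ affineSet L c).Nonempty := by
  induction hN : Module.finrank ℝ L using Nat.strong_induction_on generalizing r L with
  | _ N ih =>
  obtain hne | ⟨d, hdC, hdL, hd⟩ := inter_nonempty_or_exists_ne_zero_of_approaches
    isClosed_mixedCone (fun x hx t ht => smul_mem_mixedCone hx ht) happ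
  · exact hne
  have hd0 := hdir d hdC hdL
  obtain ⟨L₁, hL₁, hrank, hproj⟩ := Submodule.exists_finrank_lt_forall_sub_smul_mem hdL hd
  have hdir₁ : ∀ a ∈ mixedCone soc U (dropConstraints r d), a ∈ L₁ → ∀ i, soc i → a i = 0 := by
    intro a ha haL i hi
    obtain ⟨t, ht⟩ := (eventually_add_smul_mem_mixedCone hdC hd0 ha).exists
    simpa [hd0 i hi] using hdir _ ht (L.add_mem (hL₁ haL) (L.smul_mem t hdL)) i hi
  have happ₁ : Approaches (mixedCone soc U (dropConstraints r d)) (affineSet L₁ c) := by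
    intro ε hε
    obtain ⟨x, hx, y, hy, hxy⟩ := happ ε hε
    obtain ⟨s, hs⟩ := hproj _ hy
    refine ⟨x - s • d, sub_smul_mem_mixedCone_dropConstraints hdC hd0 hx s, y - s • d, ?_,
      by rwa [dist_sub_right]⟩
    simpa [affineSet, sub_right_comm] using hs
  obtain ⟨z, hzC, hzA⟩ := ih _ (hN ▸ hrank) L₁ hdir₁ happ₁ rfl
  obtain ⟨t, ht⟩ := (eventually_add_smul_mem_mixedCone hdC hd0 hzC).exists
  refine ⟨z + t • d, ht, ?_⟩
  simpa [affineSet, add_sub_right_comm] using L.add_mem (hL₁ hzA) (L.smul_mem t hdL)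

end MixedCone

section ExtendedSOC

variable {m : ℕ} {k : Fin m → ℕ} {B : ∀ i, Set (EuclideanSpace ℝ (Fin (k i + 1)))}

lemma IsESOC.zero_mem_prodSet (hB : IsESOC k B) : (0 : TS k) ∈ prodSet k B :=
  fun i => (hB i).zero_mem

lemma IsESOC.exists_prodSet_eq_mixedCone (hB : IsESOC k B) :
    ∃ U r, prodSet k B = mixedCone (fun i => B i = SOC (k i)) U r := by
  have h : ∀ i, ∃ (U : Submodule ℝ (EuclideanSpace ℝ (Fin (k i + 1)))) (r : EuclideanSpace ℝ _),
      B i ≠ SOC (k i) → B i = (U : Set _) ∩ halfSpace r := fun i => by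
    by_cases hi : B i = SOC (k i)
    · exact ⟨⊥, 0, fun h => absurd hi h⟩
    · obtain ⟨U, r, hUr⟩ := (hB i).exists_eq_inter_halfSpace hi
      exact ⟨U, r, fun _ => hUr⟩
  choose U r hUr using h
  refine ⟨U, r, congrArg (prodSet k) (funext fun i => ?_)⟩
  split_ifs with hi
  exacts [hi, hUr i hi]

lemma IsESOC.exists_mem_inter_ne_zero_on_SOC (hB : IsESOC k B) {L : Submodule ℝ (TS k)}
    {c : TS k} (hdisj : prodSet k B ∩ affineSet L c = ∅)
    (happ : Approaches (prodSet k B) (affineSet L c)) :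
    ∃ a ∈ prodSet k B, a ∈ L ∧ ∃ i, B i = SOC (k i) ∧ a i ≠ 0 := by
  by_contra! hdir
  obtain ⟨U, r, hK⟩ := hB.exists_prodSet_eq_mixedCone
  rw [hK] at hdisj happ hdir
  exact (mixedCone_inter_affineSet_nonempty L c hdir happ).ne_empty hdisj

end ExtendedSOC

section Relaxation

variable {n : ℕ}

lemma univ_ne_SOC : (Set.univ : Set (EuclideanSpace ℝ (Fin (n + 1)))) ≠ SOC n := by
  intro h
  have : -EuclideanSpace.single (0 : Fin (n + 1)) (1 : ℝ) ∈ SOC n := h ▸ Set.mem_univ _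
  norm_num [mem_SOC_iff] at this

lemma halfSpace_reflect_ne_SOC {a : EuclideanSpace ℝ (Fin (n + 1))} (ha : ‖tailVec a‖ = a 0)
    (ha0 : a ≠ 0) : halfSpace (reflect a) ≠ SOC n := by
  intro h
  have hpos : 0 < a 0 := head_pos_of_mem_SOC (mem_SOC_iff.2 ha.le) ha0
  have : -a ∈ halfSpace (reflect a) := by
    simp [halfSpace, inner_eq_head_mul_add_inner_tailVec, ha, sq]
  rw [h, mem_SOC_iff] at this
  simp only [map_neg, norm_neg, PiLp.neg_apply] at this
  linarith

variable {m : ℕ} {k : Fin m → ℕ} {B : ∀ i, Set (EuclideanSpace ℝ (Fin (k i + 1)))} {a : TS k}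
  {i : Fin m}

lemma mem_H1_iff : i ∈ H1 k B a ↔ B i = SOC (k i) ∧ ‖tailVec (a i)‖ < a i 0 := by
  simp [H1, intrinsicInterior_SOC]

lemma mem_H2_iff : i ∈ H2 k B a ↔ B i = SOC (k i) ∧ ‖tailVec (a i)‖ = a i 0 ∧ a i ≠ 0 := by
  simp [H2, intrinsicFrontier_SOC]

lemma relaxedBlocks_eq_SOC_iff (ha : a ∈ prodSet k B) :
    relaxedBlocks k B a i = SOC (k i) ↔ B i = SOC (k i) ∧ a i = 0 := by
  unfold relaxedBlocks
  split_ifs with h1 h2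
  · rw [mem_H1_iff] at h1
    exact iff_of_false univ_ne_SOC fun h => by simp [h.2] at h1
  · rw [mem_H2_iff] at h2
    exact iff_of_false (halfSpace_reflect_ne_SOC h2.2.1 h2.2.2) fun h => h2.2.2 h.2
  · refine ⟨fun hB => ⟨hB, by_contra fun ha0 => ?_⟩, And.left⟩
    rw [mem_H1_iff] at h1
    rw [mem_H2_iff] at h2
    rcases (mem_SOC_iff.1 (hB ▸ ha i)).lt_or_eq with hlt | heq
    exacts [h1 ⟨hB, hlt⟩, h2 ⟨hB, heq, ha0⟩]

lemma card_filter_relaxedBlocks_eq_SOC_lt (ha : a ∈ prodSet k B) (hi : B i = SOC (k i))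
    (hai : a i ≠ 0) :
    (Finset.univ.filter fun j => relaxedBlocks k B a j = SOC (k j)).card
      < (Finset.univ.filter fun j => B j = SOC (k j)).card := by
  simp_rw [relaxedBlocks_eq_SOC_iff ha]
  refine Finset.card_lt_card ⟨fun j hj => ?_, fun h => ?_⟩
  · simp only [Finset.mem_filter] at hj ⊢
    exact ⟨hj.1, hj.2.1⟩
  · exact hai (Finset.mem_filter.1 (h (Finset.mem_filter.2 ⟨Finset.mem_univ i, hi⟩))).2.2

lemma isESOC_relaxedBlocks (hB : IsESOC k B) (ha : a ∈ prodSet k B) :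
    IsESOC k (relaxedBlocks k B a) := by
  intro i
  unfold relaxedBlocks
  split_ifs with h1 h2
  · exact Or.inr (Or.inl rfl)
  · have haS : a i ∈ SOC (k i) := h2.1 ▸ ha i
    exact Or.inr (Or.inr (Or.inr (Or.inl
      ⟨reflect (a i), reflect_mem_SOC haS, reflect_ne_zero h2.2.2, rfl⟩)))
  · exact hB i

lemma prodSet_subset_prodSet_relaxedBlocks (ha : a ∈ prodSet k B) :
    prodSet k B ⊆ prodSet k (relaxedBlocks k B a) := by
  intro x hx i
  unfold relaxedBlocks
  split_ifs with h1 h2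
  · trivial
  · exact inner_reflect_nonneg (h2.1 ▸ ha i) (h2.1 ▸ hx i)
  · exact hx i

lemma eventuallyNearAlong_of_mem_relaxedBlocks (hB : IsESOC k B) (ha : a ∈ prodSet k B)
    {x : EuclideanSpace ℝ (Fin (k i + 1))} (hx : x ∈ relaxedBlocks k B a i) :
    EventuallyNearAlong (B i) (a i) x := by
  intro δ hδ
  unfold relaxedBlocks at hx
  split_ifs at hx with h1 h2
  · rw [mem_H1_iff] at h1
    exact ⟨0, by simpa using hδ, by simpa [h1.1] using eventually_add_smul_mem_SOC h1.2 x⟩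
  · rw [mem_H2_iff] at h2
    have hpos : 0 < a i 0 := head_pos_of_mem_SOC (h2.1 ▸ ha i) h2.2.2
    refine ⟨EuclideanSpace.single 0 (δ / 2), by simp [abs_of_pos hδ, hδ], ?_⟩
    rw [h2.1]
    exact eventually_add_smul_add_single_mem_SOC h2.2.1 hpos hx (half_pos hδ)
  · exact ⟨0, by simpa using hδ, (eventually_ge_atTop 0).mono fun t ht => by
      simpa using (hB i).add_smul_mem hx (ha i) ht⟩

end Relaxation

theorem IsESOC.exists_le_approaches_finrank_le {m : ℕ} {k : Fin m → ℕ}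
    {B : ∀ i, Set (EuclideanSpace ℝ (Fin (k i + 1)))} (hB : IsESOC k B)
    (L : Submodule ℝ (TS k)) (c : TS k) (happ : Approaches (prodSet k B) (affineSet L c)) :
    ∃ L' ≤ L, ∃ c' ∈ affineSet L c, Approaches (prodSet k B) (affineSet L' c') ∧
      Module.finrank ℝ L' ≤ (Finset.univ.filter fun i => B i = SOC (k i)).card := by
  induction hN : (Finset.univ.filter fun i => B i = SOC (k i)).card
    using Nat.strong_induction_on generalizing B L c with
  | _ N ih =>
  by_cases hfeas : (prodSet k B ∩ affineSet L c).Nonempty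
  · obtain ⟨c', hc'K, hc'A⟩ := hfeas
    exact ⟨⊥, bot_le, c', hc'A,
      fun ε hε => ⟨c', hc'K, c', mem_affineSet_self _ _, by simpa using hε⟩, by simp⟩
  obtain ⟨a, haK, haL, i, hi, hai⟩ :=
    hB.exists_mem_inter_ne_zero_on_SOC (Set.not_nonempty_iff_eq_empty.1 hfeas) happ
  have hcard := hN ▸ card_filter_relaxedBlocks_eq_SOC_lt haK hi hai
  obtain ⟨L', hL', c', hc', happ', hrank⟩ := ih _ hcard (isESOC_relaxedBlocks hB haK) L c
    (happ.mono_left (prodSet_subset_prodSet_relaxedBlocks haK)) rfl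
  have ha0 : a ≠ 0 := fun h => hai (by simp [h])
  refine ⟨L' ⊔ ℝ ∙ a, sup_le hL' ((Submodule.span_singleton_le_iff_mem a L).2 haL), c', hc',
    approaches_affineSet_sup_span (fun x (hx : x ∈ prodSet k _) => .prodSet fun j =>
      eventuallyNearAlong_of_mem_relaxedBlocks hB haK (hx j)) happ', ?_⟩
  calc Module.finrank ℝ ↥(L' ⊔ ℝ ∙ a) ≤ Module.finrank ℝ L' + Module.finrank ℝ (ℝ ∙ a) :=
        Submodule.finrank_add_le_finrank_add_finrank _ _
    _ ≤ N := by rw [finrank_span_singleton ha0]; omega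

/-- **Theorem (minimal number of directions needed to approach `K`).**
Let `(K, L, c)` be a weakly infeasible problem, where `K ⊆ ℝ^n` is an extended second order
cone with exactly `mL` Lorentz-cone blocks, `L` a linear subspace and `c` a point.  Then
there exist a linear subspace `L' ⊆ L` and a point `c' ∈ L + c` such that `(K, L', c')` is
weakly infeasible and the dimension of the affine set `L' + c'` (i.e. `dim L'`) is at most
`mL`. -/
theorem weakly_infeasible_low_dimensional_subspace {m : ℕ} (k : Fin m → ℕ)
    (B : ∀ i, Set (EuclideanSpace ℝ (Fin (k i + 1)))) (hB : IsESOC k B)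
    (L : Submodule ℝ (TS k)) (c : TS k) (mL : ℕ)
    (hmL : (Finset.univ.filter fun i => B i = SOC (k i)).card = mL)
    (hwi : WeaklyInfeasible (prodSet k B) L c) :
    ∃ (L' : Submodule ℝ (TS k)) (c' : TS k), L' ≤ L ∧ c' ∈ affineSet L c ∧
      WeaklyInfeasible (prodSet k B) L' c' ∧ Module.finrank ℝ L' ≤ mL := by
  subst hmL
  obtain ⟨hdisj, hdist⟩ := hwi
  have hK : (prodSet k B).Nonempty := ⟨0, hB.zero_mem_prodSet⟩
  obtain ⟨L', hL', c', hc', happ', hrank⟩ := hB.exists_le_approaches_finrank_le L c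
    ((setDist_eq_zero_iff hK ⟨c, mem_affineSet_self L c⟩).1 hdist)
  refine ⟨L', c', hL', hc', ⟨?_, (setDist_eq_zero_iff hK ⟨c', mem_affineSet_self L' c'⟩).2 happ'⟩,
    hrank⟩
  exact Set.subset_eq_empty (Set.inter_subset_inter_right _ (affineSet_subset_affineSet hL' hc'))
    hdisj

end
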